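/- arXiv:1403.5286 — 2 statements merged into one kernel-verified Lean document; each statement's English description precedes it below -/
import Mathlib

section
/- Let θ ∈ (0, π/2), c = tan θ, and a ∈ (1/4, 1/2). For all sufficiently large n, for every point x = r·e^{i(-π/2+σ)} with αn ≤ r ≤ n and |σ| ≤ n^{-a} (where α ∈ (0,1) is fixed), the quadrangle Q_x (as defined via angle parameter θ) lies strictly above the horizontal line through x, i.e., every point of Q_x other than x has second coordinate strictly greater than that of x. -/
open Real EuclideanGeometry Complex

/-! Seen from `x`, the origin lies in direction `-x`, at angle `|σ|` from the upward vertical `I`.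
The sides `xy` and `xz` make angle `θ` with `xO`, so by the triangle inequality for angles they make
an angle at most `θ + |σ| < π / 2` with `I`: the vertices `O`, `y`, `z` lie strictly above `x`.
Any other point of `Q_x` lies on a segment from `x` to the triangle `Oyz`, hence strictly above
`x` as well. -/

theorem InnerProductGeometry.inner_pos_of_angle_lt_pi_div_two {V : Type*} [NormedAddCommGroup V]
    [InnerProductSpace ℝ V] {x y : V} (h : angle x y < π / 2) : 0 < inner ℝ x y := by
  have hx : x ≠ 0 := by rintro rfl; simp at h
  have hy : y ≠ 0 := by rintro rfl; simp at h
  rw [← cos_angle_mul_norm_mul_norm]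
  have := Real.cos_pos_of_mem_Ioo ⟨by linarith [angle_nonneg x y, pi_pos], h⟩
  positivity

namespace Complex

open InnerProductGeometry

theorem im_pos_of_angle_I_lt_pi_div_two {w : ℂ} (h : InnerProductGeometry.angle w I < π / 2) :
    0 < w.im := by
  simpa [Complex.inner] using inner_pos_of_angle_lt_pi_div_two h

theorem im_pos_of_angle_add_angle_I_lt_pi_div_two {w v : ℂ}
    (h : InnerProductGeometry.angle w v + InnerProductGeometry.angle v I < π / 2) : 0 < w.im :=
  im_pos_of_angle_I_lt_pi_div_two ((InnerProductGeometry.angle_le_angle_add_angle w v I).trans_lt h)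

theorem angle_neg_ofReal_mul_exp_I {r σ : ℝ} (hr : 0 < r) (hσ : |σ| < π) :
    InnerProductGeometry.angle (-(r * exp (I * (-(π / 2) + σ)))) I = |σ| := by
  have hexp : exp (I * (-(π / 2) + σ)) = exp (σ * I) * -I := by
    rw [mul_comm I, add_mul, exp_add, mul_comm]
    congr 1
    rw [← ofReal_ofNat, ← ofReal_div, ← ofReal_neg, exp_mul_I]
    simp
  have hrot := angle_mul_right (a := -I) (by simp) (exp (σ * I)) 1
  rw [one_mul] at hrot
  rw [← angle_neg_neg, neg_neg, hexp, ← real_smul, angle_smul_left_of_pos _ _ hr, hrot,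
    angle_exp_one,
    (toIocMod_eq_self _).2 ⟨by linarith [neg_abs_le σ], by linarith [le_abs_self σ]⟩]

end Complex

theorem lt_apply_of_mem_convexHull_insert {E : Type*} [AddCommGroup E] [Module ℝ E]
    (f : E →ₗ[ℝ] ℝ) {x p : E} {s : Set E} (hs : ∀ q ∈ s, f x < f q)
    (hp : p ∈ convexHull ℝ (insert x s)) (hpx : p ≠ x) : f x < f p := by
  rcases s.eq_empty_or_nonempty with rfl | hne
  · simp_all
  rw [convexHull_insert hne, mem_convexJoin] at hp
  obtain ⟨x', hx', q, hq, hpq⟩ := hp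
  rw [Set.mem_singleton_iff.mp hx', segment_eq_image] at hpq
  obtain ⟨t, ⟨ht0, ht1⟩, rfl⟩ := hpq
  have hfq : f x < f q := convexHull_min hs (convex_halfSpace_gt f.isLinear (f x)) hq
  have ht : 0 < t := ht0.lt_of_ne (by rintro rfl; simp at hpx)
  simp only [map_add, map_smul, smul_eq_mul]
  nlinarith

open Filter Topology in
/-- Let `θ ∈ (0, π/2)` and `a ∈ (1/4, 1/2)`, and fix `α ∈ (0,1)`. For all
sufficiently large `n`, for every point `x = r·exp(i(-π/2+σ))` with `αn ≤ r ≤ n` and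
`|σ| ≤ n^{-a}`, the quadrangle `Q_x` (the convex quadrangle with opposite vertices `O` and `x`,
right angles at the other two vertices `y, z`, angle `2θ` at `x`, with `Ox` bisecting the angles
at `O` and at `x`) lies strictly above the horizontal line through `x`: every point of `Q_x`
other than `x` has second coordinate strictly greater than that of `x`. -/
theorem stmt1 (θ : ℝ) (hθ : θ ∈ Set.Ioo 0 (π / 2)) (a : ℝ) (ha : a ∈ Set.Ioo (1/4 : ℝ) (1/2))
    (α : ℝ) (hα : α ∈ Set.Ioo (0 : ℝ) 1) :
    ∃ N : ℕ, ∀ n : ℕ, N ≤ n → ∀ r σ : ℝ,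
      α * n ≤ r → r ≤ n → |σ| ≤ (n : ℝ) ^ (-a) →
      ∀ x y z : ℂ, x = (r : ℂ) * Complex.exp (Complex.I * (-(π/2) + σ)) →
      x ≠ 0 → y ≠ 0 → z ≠ 0 → y ≠ x → z ≠ x → y ≠ z →
      ∠ (0 : ℂ) y x = π / 2 → ∠ (0 : ℂ) z x = π / 2 →
      ∠ y x z = 2 * θ → ∠ y x (0 : ℂ) = θ → ∠ z x (0 : ℂ) = θ →
      ∠ y (0 : ℂ) x = ∠ z (0 : ℂ) x →
      ∀ p ∈ convexHull ℝ ({0, y, x, z} : Set ℂ), p ≠ x → x.im < p.im := by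
  have hdecay : Tendsto (fun n : ℕ => (n : ℝ) ^ (-a)) atTop (𝓝 0) :=
    (tendsto_rpow_neg_atTop (by linarith [ha.1])).comp tendsto_natCast_atTop_atTop
  have hsmall : ∀ᶠ n : ℕ in atTop, (n : ℝ) ^ (-a) < π / 2 - θ ∧ 1 ≤ n :=
    (hdecay.eventually_lt_const (by linarith [hθ.2])).and (eventually_ge_atTop 1)
  obtain ⟨N, hN⟩ := eventually_atTop.mp hsmall
  refine ⟨N, fun n hn r σ hαr _ hσ x y z hx _ _ _ _ _ _ _ _ _ hyx hzx _ p hp hpx => ?_⟩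
  obtain ⟨hσn, hn⟩ := hN n hn
  have hσθ : |σ| + θ < π / 2 := by linarith
  have hr : 0 < r := lt_of_lt_of_le (mul_pos hα.1 (by exact_mod_cast hn)) hαr
  have hxI : InnerProductGeometry.angle (-x) I = |σ| :=
    hx ▸ angle_neg_ofReal_mul_exp_I hr (by linarith [hθ.1, pi_pos])
  have hO : x.im < 0 := by
    simpa using im_pos_of_angle_I_lt_pi_div_two (w := -x) (by linarith [hθ.1])
  have hside : ∀ w : ℂ, ∠ w x 0 = θ → x.im < w.im := fun w hw => by
    have hw' : InnerProductGeometry.angle (w - x) (-x) = θ := by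
      simpa [EuclideanGeometry.angle] using hw
    have hsum : InnerProductGeometry.angle (w - x) (-x) + InnerProductGeometry.angle (-x) I
        < π / 2 := by rw [hw', hxI]; linarith
    simpa using im_pos_of_angle_add_angle_I_lt_pi_div_two hsum
  rw [Set.insert_comm y, Set.insert_comm 0] at hp
  refine lt_apply_of_mem_convexHull_insert imLm ?_ hp hpx
  simp only [Set.mem_insert_iff, Set.mem_singleton_iff, forall_eq_or_imp, forall_eq]
  exact ⟨hO, hside y hyx, hside z hzx⟩
end

section
/- Let Ξ(r e^{i(-π/2+σ)}) = (nσ, n(n−r)/r). If x = r e^{i(-π/2+σ)} with r = n/(1 + s/n) (so Ξ(x) = (nσ, s)), then the Jacobian determinant of the transformation (y, s) ↦ Ξ^{-1}(y, s) ∈ ℝ² (expressed in Cartesian coordinates) equals (1 + s/n)^{-3} in absolute value. -/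
open Real

/-! The map is polar coordinates `(θ, r) ↦ (r cos θ, r sin θ)`, whose Jacobian determinant is `r`,
composed with the diagonal change of variables `θ = -π/2 + y/n`, `r = n/(1 + s/n)`, whose Jacobian
determinant is `(1/n) · (-(1 + s/n)⁻²)`. Their product is `-(1 + s/n)⁻³`. -/

theorem det_fderiv_polar_comp {f g : ℝ → ℝ} {f' g' y s : ℝ}
    (hf : HasDerivAt f f' y) (hg : HasDerivAt g g' s) :
    LinearMap.det (fderiv ℝ (fun p : ℝ × ℝ => (g p.2 * cos (f p.1), g p.2 * sin (f p.1))) (y, s)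
      : (ℝ × ℝ) →ₗ[ℝ] (ℝ × ℝ)) = -(g s * g' * f') := by
  have hG : HasFDerivAt (fun p : ℝ × ℝ => g p.2) (g' • ContinuousLinearMap.snd ℝ ℝ ℝ) (y, s) :=
    hg.comp_hasFDerivAt (y, s) hasFDerivAt_snd
  have hcos : HasFDerivAt (fun p : ℝ × ℝ => cos (f p.1))
      ((-sin (f y) * f') • ContinuousLinearMap.fst ℝ ℝ ℝ) (y, s) :=
    hf.cos.comp_hasFDerivAt (f := Prod.fst) (y, s) hasFDerivAt_fst
  have hsin : HasFDerivAt (fun p : ℝ × ℝ => sin (f p.1))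
      ((cos (f y) * f') • ContinuousLinearMap.fst ℝ ℝ ℝ) (y, s) :=
    hf.sin.comp_hasFDerivAt (f := Prod.fst) (y, s) hasFDerivAt_fst
  have hpolar : HasFDerivAt (fun p : ℝ × ℝ => (g p.2 * cos (f p.1), g p.2 * sin (f p.1))) _ (y, s) :=
    (hG.mul hcos).prodMk (hG.mul hsin)
  rw [hpolar.fderiv, ← LinearMap.det_toMatrix (Module.Basis.finTwoProd ℝ), Matrix.det_fin_two]
  simp only [neg_mul, ContinuousLinearMap.coe_prod, ContinuousLinearMap.toLinearMap_add,
    ContinuousLinearMap.toLinearMap_smul, ContinuousLinearMap.coe_fst, neg_smul, smul_neg,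
    ContinuousLinearMap.coe_snd, Fin.isValue, LinearMap.toMatrix_apply, Module.Basis.finTwoProd_zero,
    LinearMap.prod_apply, Function.prod_apply, LinearMap.add_apply, LinearMap.neg_apply,
    LinearMap.smul_apply, LinearMap.fst_apply, smul_eq_mul, mul_one, LinearMap.snd_apply, mul_zero,
    add_zero, Module.Basis.coe_finTwoProd_repr, Matrix.cons_val_zero, Module.Basis.finTwoProd_one,
    neg_zero, zero_add, Matrix.cons_val_one, Matrix.cons_val_fin_one]
  linear_combination -(g s * g' * f') * sin_sq_add_cos_sq (f y)

theorem hasDerivAt_div_one_add_div {n : ℝ} (hn : n ≠ 0) {s : ℝ} (hs : 1 + s / n ≠ 0) :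
    HasDerivAt (fun t : ℝ => n / (1 + t / n)) (-(1 + s / n)⁻¹ ^ 2) s := by
  have hden : HasDerivAt (fun t : ℝ => 1 + t / n) (1 / n) s := by
    simpa using ((hasDerivAt_id s).div_const n).const_add 1
  exact ((hasDerivAt_const s n).div hden hs).congr_deriv (by field_simp; ring)

/-- Let `Ξ⁻¹(y, s)` be the point of `ℝ²` with polar coordinates
`r = n/(1 + s/n)` and argument `−π/2 + y/n`, i.e.
`Ξ⁻¹(y,s) = (r cos(−π/2 + y/n), r sin(−π/2 + y/n))`.  Then the Jacobian determinant of the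
transformation `(y, s) ↦ Ξ⁻¹(y, s)` equals `(1 + s/n)^{-3}` in absolute value (for `s ≥ 0`). -/
theorem stmt3 (n : ℝ) (hn : 0 < n) (F : ℝ × ℝ → ℝ × ℝ)
    (hF : ∀ p : ℝ × ℝ, F p =
      ((n / (1 + p.2 / n)) * Real.cos (-(π/2) + p.1 / n),
       (n / (1 + p.2 / n)) * Real.sin (-(π/2) + p.1 / n))) :
    ∀ y s : ℝ, 0 ≤ s →
      |LinearMap.det (fderiv ℝ F (y, s) : (ℝ × ℝ) →ₗ[ℝ] (ℝ × ℝ))| = (1 + s / n) ^ (-3 : ℝ) := by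
  intro y s hs
  have hw : 0 < 1 + s / n := by positivity
  have hangle : HasDerivAt (fun t : ℝ => -(π/2) + t / n) (1 / n) y := by
    simpa using ((hasDerivAt_id y).div_const n).const_add (-(π/2))
  rw [funext hF, det_fderiv_polar_comp hangle (hasDerivAt_div_one_add_div hn.ne' hw.ne'),
    rpow_neg hw.le, rpow_ofNat, show -(n / (1 + s / n) * -(1 + s / n)⁻¹ ^ 2 * (1 / n)) = ((1 + s / n) ^ 3)⁻¹ by
    field_simp, abs_of_pos (by positivity)]
end
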